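/- Let $X$ be a complex inner product space with inner product $a(\cdot,\cdot)$, $P : X \to X$ an orthogonal projection with respect to $a$, and let $s$ be a Hermitian positive semidefinite sesquilinear form on $X$ satisfying $c_1\, a((I-P)v,(I-P)v) \leq s((I-P)v,(I-P)v) \leq c_2\, a((I-P)v,(I-P)v)$ for all $v \in X$, with constants $0 < c_1 \leq c_2$. Define $a_h(u,v) := a(Pu,Pv) + s((I-P)u,(I-P)v)$. Then $\min(1,c_1)\, a(v,v) \leq a_h(v,v) \leq \max(1,c_2)\, a(v,v)$ for all $v \in X$. -/

import Mathlib

/-!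
Since `P` is `a`-orthogonal, `a(v,v) = a(Pv,Pv) + a((I-P)v,(I-P)v)` (Pythagoras), while
`a_h(v,v) = a(Pv,Pv) + s((I-P)v,(I-P)v)`. The two sums share their first term, and the second
terms are comparable by the hypotheses on `s`; the constants `min 1 c₁` and `max 1 c₂` cover both.
-/

open scoped InnerProductSpace

section Projection

variable {𝕜 X : Type*} [RCLike 𝕜] [NormedAddCommGroup X] [InnerProductSpace 𝕜 X]
  {P : X →ₗ[𝕜] X}

theorem LinearMap.IsSymmetric.inner_map_sub_map_eq_zero (hP : P.IsSymmetric)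
    (hidem : ∀ v, P (P v) = P v) (v : X) : ⟪P v, v - P v⟫_𝕜 = 0 := by
  rw [hP, map_sub, hidem, sub_self, inner_zero_right]

theorem LinearMap.IsSymmetric.norm_sq_eq_norm_map_sq_add_norm_sub_map_sq (hP : P.IsSymmetric)
    (hidem : ∀ v, P (P v) = P v) (v : X) : ‖v‖ ^ 2 = ‖P v‖ ^ 2 + ‖v - P v‖ ^ 2 := by
  simpa only [add_sub_cancel, sq] using
    norm_add_sq_eq_norm_sq_add_norm_sq_of_inner_eq_zero _ _ (hP.inner_map_sub_map_eq_zero hidem v)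

end Projection

section Bounds

variable {p q t c : ℝ}

theorem min_one_mul_add_le_add (hp : 0 ≤ p) (hq : 0 ≤ q) (ht : c * q ≤ t) :
    min 1 c * (p + q) ≤ p + t := by
  have hpq : min 1 c * p ≤ p := mul_le_of_le_one_left hp (min_le_left 1 c)
  have hqt : min 1 c * q ≤ t := (mul_le_mul_of_nonneg_right (min_le_right 1 c) hq).trans ht
  linarith [mul_add (min 1 c) p q]

theorem add_le_max_one_mul_add (hp : 0 ≤ p) (hq : 0 ≤ q) (ht : t ≤ c * q) :
    p + t ≤ max 1 c * (p + q) := by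
  have hpq : p ≤ max 1 c * p := le_mul_of_one_le_left hp (le_max_left 1 c)
  have hqt : t ≤ max 1 c * q := ht.trans (mul_le_mul_of_nonneg_right (le_max_right 1 c) hq)
  linarith [mul_add (max 1 c) p q]

end Bounds

theorem stmt6_general {X : Type*} [NormedAddCommGroup X] [InnerProductSpace ℂ X]
    (P : X →L[ℂ] X) (hidem : ∀ v, P (P v) = P v)
    (hsa : ∀ u v : X, (inner ℂ (P u) v : ℂ) = (inner ℂ u (P v) : ℂ))
    (s : X → X → ℂ)
    (c₁ c₂ : ℝ)
    (hlow : ∀ v : X, c₁ * ((inner ℂ (v - P v) (v - P v) : ℂ)).re ≤ (s (v - P v) (v - P v)).re)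
    (hup : ∀ v : X, (s (v - P v) (v - P v)).re ≤ c₂ * ((inner ℂ (v - P v) (v - P v) : ℂ)).re)
    (ah : X → X → ℂ)
    (hah : ∀ u v, ah u v = (inner ℂ (P u) (P v) : ℂ) + s (u - P u) (v - P v)) :
    ∀ v : X, min 1 c₁ * ((inner ℂ v v : ℂ)).re ≤ (ah v v).re ∧
      (ah v v).re ≤ max 1 c₂ * ((inner ℂ v v : ℂ)).re := by
  intro v
  have hsym : (P : X →ₗ[ℂ] X).IsSymmetric := hsa
  have hnorm : ∀ w : X, (inner ℂ w w).re = ‖w‖ ^ 2 := fun w => inner_self_eq_norm_sq (𝕜 := ℂ) w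
  simp only [hah, Complex.add_re, hnorm] at hlow hup ⊢
  rw [hsym.norm_sq_eq_norm_map_sq_add_norm_sub_map_sq hidem v]
  exact ⟨min_one_mul_add_le_add (sq_nonneg _) (sq_nonneg _) (hlow v),
    add_le_max_one_mul_add (sq_nonneg _) (sq_nonneg _) (hup v)⟩

/-- Stability of the stabilized form: if the stabilization `s` is spectrally equivalent to the
complementary part of the orthogonal projection `P`, then
`min(1,c₁) a(v,v) ≤ a_h(v,v) ≤ max(1,c₂) a(v,v)`. -/
theorem stmt6 {X : Type*} [NormedAddCommGroup X] [InnerProductSpace ℂ X]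
    (P : X →L[ℂ] X) (hidem : ∀ v, P (P v) = P v)
    (hsa : ∀ u v : X, (inner ℂ (P u) v : ℂ) = (inner ℂ u (P v) : ℂ))
    (s : X → X → ℂ)
    (hherm : ∀ u v, s u v = (starRingEnd ℂ) (s v u))
    (hpsd : ∀ v, 0 ≤ (s v v).re)
    (c₁ c₂ : ℝ) (hc₁ : 0 < c₁) (hc₁₂ : c₁ ≤ c₂)
    (hlow : ∀ v : X, c₁ * ((inner ℂ (v - P v) (v - P v) : ℂ)).re ≤ (s (v - P v) (v - P v)).re)
    (hup : ∀ v : X, (s (v - P v) (v - P v)).re ≤ c₂ * ((inner ℂ (v - P v) (v - P v) : ℂ)).re)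
    (ah : X → X → ℂ)
    (hah : ∀ u v, ah u v = (inner ℂ (P u) (P v) : ℂ) + s (u - P u) (v - P v)) :
    ∀ v : X, min 1 c₁ * ((inner ℂ v v : ℂ)).re ≤ (ah v v).re ∧
      (ah v v).re ≤ max 1 c₂ * ((inner ℂ v v : ℂ)).re :=
  stmt6_general P hidem hsa s c₁ c₂ hlow hup ah hah
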